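/- If f' : [0,1] → ℝ is absolutely continuous, f'' ∈ L¹(0,1), and γ₂ ≤ f''(t) ≤ Γ₂ on [0,1], then |Q(f) - P(f)| ≤ ((Γ₂ - γ₂)/2)((5/96)√6 - (29/432)√3), where Q(f) = ∫₀¹ f - (√2/8)f(0) - (1-√2/4)f(1/2) - (√2/8)f(1) and P(f) = ((4 - 3√2)/96)(f'(1) - f'(0)). -/

import Mathlib

open MeasureTheory Real Set

/-!
Integrating by parts twice on each half of `[0, 1]` gives the Peano kernel representation
`Q(f) - P(f) = ∫₀^{1/2} k(s) f''(s) ds + ∫_{1/2}^1 k(1 - s) f''(s) ds` with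
`k(s) = s²/2 - (√2/8) s - (4 - 3√2)/96`. Both kernels have mean zero, so `f''` may be replaced by
`f'' - (γ₂ + Γ₂)/2`, which is bounded by `(Γ₂ - γ₂)/2`; the constant is `2 ∫₀^{1/2} |k|`, computed
by splitting at the roots `√2/8 ± √3(3√2 - 2)/24` of `k`.
-/

/-- For `F` this is absolute continuity on `uIcc a b`, with `G` as an a.e. derivative. -/
def IsPrimitiveOn (F G : ℝ → ℝ) (a b : ℝ) : Prop :=
  IntervalIntegrable G volume a b ∧ ∀ t ∈ uIcc a b, F t = F a + ∫ s in a..t, G s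

namespace IsPrimitiveOn

variable {F G : ℝ → ℝ} {a b c d : ℝ}

theorem continuousOn (h : IsPrimitiveOn F G a b) : ContinuousOn F (uIcc a b) := by
  have hP := intervalIntegral.continuousOn_primitive_interval' h.1 left_mem_uIcc
  exact (continuousOn_const.add hP).congr h.2

theorem intervalIntegrable (h : IsPrimitiveOn F G a b) : IntervalIntegrable F volume a b :=
  h.continuousOn.intervalIntegrable

theorem mono (h : IsPrimitiveOn F G a b) (hc : c ∈ uIcc a b) (hd : d ∈ uIcc a b) :
    IsPrimitiveOn F G c d := by
  have hsub : uIcc c d ⊆ uIcc a b := uIcc_subset_uIcc hc hd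
  refine ⟨h.1.mono_set hsub, fun t ht => ?_⟩
  have hI : ∀ x ∈ uIcc a b, IntervalIntegrable G volume a x := fun x hx =>
    h.1.mono_set (uIcc_subset_uIcc left_mem_uIcc hx)
  rw [h.2 t (hsub ht), h.2 c hc, ← intervalIntegral.integral_interval_sub_left
    (hI t (hsub ht)) (hI c hc)]
  ring

theorem integral_mul_eq_by_parts (h : IsPrimitiveOn F G a b) {φ φ' : ℝ → ℝ}
    (hφ : ∀ t, HasDerivAt φ (φ' t) t) (hφ' : Continuous φ') :
    ∫ t in a..b, φ t * G t = φ b * F b - φ a * F a - ∫ t in a..b, φ' t * F t := by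
  set P : ℝ → ℝ := fun x => ∫ s in a..x, G s
  have hPac : AbsolutelyContinuousOnInterval P a b :=
    h.1.absolutelyContinuousOnInterval_intervalIntegral left_mem_uIcc
  have hderiv : deriv φ = φ' := funext fun t => (hφ t).deriv
  have hφac : AbsolutelyContinuousOnInterval φ a b :=
    (contDiff_one_iff_deriv.2 ⟨fun t => (hφ t).differentiableAt, hderiv ▸ hφ'⟩).contDiffOn
      |>.absolutelyContinuousOnInterval
  have hG : ∫ t in a..b, φ t * G t = ∫ t in a..b, φ t * deriv P t := by
    refine intervalIntegral.integral_congr_ae ?_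
    filter_upwards [h.1.ae_hasDerivAt_integral] with x hx hx'
    rw [(hx (uIoc_subset_uIcc hx') a left_mem_uIcc).deriv]
  have hF : ∫ t in a..b, φ' t * F t = (φ b - φ a) * F a + ∫ t in a..b, φ' t * P t := by
    have hφ'I : IntervalIntegrable φ' volume a b := hφ'.intervalIntegrable _ _
    have hPI : IntervalIntegrable (fun t => φ' t * P t) volume a b :=
      (hφ'.continuousOn.mul hPac.continuousOn).intervalIntegrable
    rw [intervalIntegral.integral_congr (g := fun t => φ' t * F a + φ' t * P t)
        fun t ht => by rw [h.2 t ht, mul_add],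
      intervalIntegral.integral_add (hφ'I.mul_const _) hPI, intervalIntegral.integral_mul_const,
      intervalIntegral.integral_eq_sub_of_hasDerivAt (fun x _ => hφ x) hφ'I]
  rw [hG, hφac.integral_mul_deriv_eq_deriv_mul hPac, hderiv, hF, h.2 b right_mem_uIcc]
  simp only [P, intervalIntegral.integral_same]
  ring

theorem integral_mul_eq_by_parts_twice {F' F'' φ φ' φ'' : ℝ → ℝ} (h₁ : IsPrimitiveOn F F' a b)
    (h₂ : IsPrimitiveOn F' F'' a b) (hφ : ∀ t, HasDerivAt φ (φ' t) t)
    (hφ' : ∀ t, HasDerivAt φ' (φ'' t) t) (hφ'' : Continuous φ'') :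
    ∫ t in a..b, φ t * F'' t
      = φ b * F' b - φ a * F' a - φ' b * F b + φ' a * F a + ∫ t in a..b, φ'' t * F t := by
  have hφ'c : Continuous φ' := continuous_iff_continuousAt.2 fun t => (hφ' t).continuousAt
  rw [h₂.integral_mul_eq_by_parts hφ hφ'c, h₁.integral_mul_eq_by_parts hφ' hφ'']
  ring

end IsPrimitiveOn

theorem abs_integral_mul_le_of_integral_eq_zero {K g : ℝ → ℝ} {a b γ Γ : ℝ} (hab : a ≤ b)
    (hK : Continuous K) (hK₀ : ∫ t in a..b, K t = 0) (hg : IntervalIntegrable g volume a b)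
    (hbd : ∀ t ∈ Icc a b, γ ≤ g t ∧ g t ≤ Γ) :
    |∫ t in a..b, K t * g t| ≤ (Γ - γ) / 2 * ∫ t in a..b, |K t| := by
  set m := (γ + Γ) / 2 with hm
  have hKg : IntervalIntegrable (fun t => K t * g t) volume a b :=
    hg.continuousOn_mul hK.continuousOn
  have hKI : IntervalIntegrable K volume a b := hK.intervalIntegrable _ _
  have hcentre : ∫ t in a..b, K t * g t = ∫ t in a..b, K t * (g t - m) := by
    simp only [mul_sub, intervalIntegral.integral_sub hKg (hKI.mul_const m),
      intervalIntegral.integral_mul_const, hK₀, zero_mul, sub_zero]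
  calc |∫ t in a..b, K t * g t|
      ≤ ∫ t in a..b, |K t * (g t - m)| :=
        hcentre ▸ intervalIntegral.abs_integral_le_integral_abs hab
    _ ≤ ∫ t in a..b, |K t| * ((Γ - γ) / 2) := by
        refine intervalIntegral.integral_mono_on hab
          ((hg.sub intervalIntegrable_const).continuousOn_mul hK.continuousOn).abs
          ((hK.abs.mul continuous_const).intervalIntegrable _ _) fun t ht => ?_
        rw [abs_mul]
        refine mul_le_mul_of_nonneg_left (abs_le.2 ⟨?_, ?_⟩) (abs_nonneg _) <;>
          linarith [hbd t ht, hm]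
    _ = (Γ - γ) / 2 * ∫ t in a..b, |K t| := by
        rw [intervalIntegral.integral_mul_const, mul_comm]

theorem integral_sq_sub_sq (a b c δ : ℝ) :
    ∫ s in a..b, ((s - c) ^ 2 - δ ^ 2) = ((b - c) ^ 3 - (a - c) ^ 3) / 3 - δ ^ 2 * (b - a) := by
  rw [intervalIntegral.integral_sub (f := fun s => (s - c) ^ 2)
      ((continuous_sub_right c).pow 2 |>.intervalIntegrable _ _) intervalIntegrable_const,
    intervalIntegral.integral_comp_sub_right (fun s => s ^ 2), integral_pow]
  simp only [intervalIntegral.integral_const, smul_eq_mul]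
  ring

theorem integral_abs_sq_sub_sq {a b c δ : ℝ} (ha : a ≤ c - δ) (hδ : 0 ≤ δ) (hb : c + δ ≤ b) :
    ∫ s in a..b, |(s - c) ^ 2 - δ ^ 2| = (∫ s in a..b, ((s - c) ^ 2 - δ ^ 2)) + 8 * δ ^ 3 / 3 := by
  have hI : ∀ x y : ℝ, IntervalIntegrable (fun s => |(s - c) ^ 2 - δ ^ 2|) volume x y :=
    fun x y => (by fun_prop : Continuous fun s : ℝ => |(s - c) ^ 2 - δ ^ 2|).intervalIntegrable
      _ _
  have h₁ : ∫ s in a..c - δ, |(s - c) ^ 2 - δ ^ 2| = ∫ s in a..c - δ, ((s - c) ^ 2 - δ ^ 2) := by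
    refine intervalIntegral.integral_congr fun s hs => abs_of_nonneg ?_
    rw [uIcc_of_le ha] at hs
    nlinarith [hs.2]
  have h₂ : ∫ s in c - δ..c + δ, |(s - c) ^ 2 - δ ^ 2|
      = -∫ s in c - δ..c + δ, ((s - c) ^ 2 - δ ^ 2) := by
    rw [← intervalIntegral.integral_neg]
    refine intervalIntegral.integral_congr fun s hs => abs_of_nonpos ?_
    rw [uIcc_of_le (by linarith)] at hs
    nlinarith [hs.1, hs.2]
  have h₃ : ∫ s in c + δ..b, |(s - c) ^ 2 - δ ^ 2| = ∫ s in c + δ..b, ((s - c) ^ 2 - δ ^ 2) := by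
    refine intervalIntegral.integral_congr fun s hs => abs_of_nonneg ?_
    rw [uIcc_of_le hb] at hs
    nlinarith [hs.1]
  rw [← intervalIntegral.integral_add_adjacent_intervals (hI a (c - δ)) (hI _ _),
    ← intervalIntegral.integral_add_adjacent_intervals (hI (c - δ) (c + δ)) (hI _ b), h₁, h₂, h₃]
  simp only [integral_sq_sub_sq]
  ring

noncomputable def peanoKernel (s : ℝ) : ℝ := s ^ 2 / 2 - √2 / 8 * s - (4 - 3 * √2) / 96

theorem hasDerivAt_peanoKernel (s : ℝ) : HasDerivAt peanoKernel (s - √2 / 8) s :=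
  ((((hasDerivAt_id' s).pow 2).div_const 2).sub ((hasDerivAt_id' s).const_mul (√2 / 8))
    |>.sub_const ((4 - 3 * √2) / 96)).congr_deriv (by ring)

theorem peanoKernel_eq (s : ℝ) :
    peanoKernel s = ((s - √2 / 8) ^ 2 - (√3 * (3 * √2 - 2) / 24) ^ 2) / 2 := by
  have h2 : √2 ^ 2 = 2 := sq_sqrt (by norm_num)
  have h3 : √3 ^ 2 = 3 := sq_sqrt (by norm_num)
  unfold peanoKernel
  linear_combination (3 * √2 - 2) ^ 2 / 1152 * h3 + (1 / 64) * h2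

theorem integral_peanoKernel : ∫ s in (0:ℝ)..1/2, peanoKernel s = 0 := by
  have h2 : √2 ^ 2 = 2 := sq_sqrt (by norm_num)
  have h3 : √3 ^ 2 = 3 := sq_sqrt (by norm_num)
  simp only [peanoKernel_eq, intervalIntegral.integral_div, integral_sq_sub_sq]
  linear_combination ((3 * √2 - 2) ^ 2 / 1152 + √2 / 64 - 3 * √2 ^ 2 / 256 - 1 / 192) * h3
    - (1 / 128) * h2

theorem integral_abs_peanoKernel :
    ∫ s in (0:ℝ)..1/2, |peanoKernel s| = (5 / 96 * √6 - 29 / 432 * √3) / 2 := by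
  have h2 : √2 ^ 2 = 2 := sq_sqrt (by norm_num)
  have h3 : √3 ^ 2 = 3 := sq_sqrt (by norm_num)
  have h2lo : 1.41 < √2 := lt_sqrt_of_sq_lt (by norm_num)
  have h2hi : √2 < 1.42 := (sqrt_lt' (by norm_num)).2 (by norm_num)
  have h3lo : 1.73 < √3 := lt_sqrt_of_sq_lt (by norm_num)
  have h3hi : √3 < 1.74 := (sqrt_lt' (by norm_num)).2 (by norm_num)
  set δ := √3 * (3 * √2 - 2) / 24 with hδ
  have hδ₀ : 0 ≤ δ := div_nonneg (mul_nonneg (sqrt_nonneg 3) (by linarith)) (by norm_num)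
  have hlo : 0 ≤ √2 / 8 - δ := by nlinarith
  have hhi : √2 / 8 + δ ≤ 1 / 2 := by nlinarith
  have hmean : ∫ s in (0:ℝ)..1/2, ((s - √2 / 8) ^ 2 - δ ^ 2) = 0 := by
    simpa only [peanoKernel_eq, intervalIntegral.integral_div, div_eq_zero_iff, two_ne_zero,
      or_false] using integral_peanoKernel
  simp only [peanoKernel_eq, abs_div, abs_two, intervalIntegral.integral_div]
  rw [integral_abs_sq_sub_sq hlo hδ₀ hhi, hmean, show (6:ℝ) = 2 * 3 by norm_num,
    sqrt_mul zero_le_two, hδ]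
  linear_combination √3 * (3 * √2 - 2) ^ 3 / 10368 * h3 + 3 * √3 * (27 * √2 - 54) / 10368 * h2

theorem quadrature_error_eq_integral_peanoKernel {f f' f'' : ℝ → ℝ}
    (h₁ : IsPrimitiveOn f f' 0 1) (h₂ : IsPrimitiveOn f' f'' 0 1) :
    ((∫ t in (0:ℝ)..1, f t) - √2 / 8 * f 0 - (1 - √2 / 4) * f (1/2) - √2 / 8 * f 1)
        - (4 - 3 * √2) / 96 * (f' 1 - f' 0)
      = (∫ s in (0:ℝ)..1/2, peanoKernel s * f'' s)
        + ∫ s in (1/2:ℝ)..1, peanoKernel (1 - s) * f'' s := by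
  have hm : (1/2 : ℝ) ∈ uIcc 0 1 := by rw [uIcc_of_le zero_le_one]; norm_num
  have hL := (h₁.mono left_mem_uIcc hm).integral_mul_eq_by_parts_twice (h₂.mono left_mem_uIcc hm)
    hasDerivAt_peanoKernel (fun t => (hasDerivAt_id' t).sub_const (√2 / 8)) continuous_const
  have hR := (h₁.mono hm right_mem_uIcc).integral_mul_eq_by_parts_twice (h₂.mono hm right_mem_uIcc)
    (φ := fun s => peanoKernel (1 - s)) (φ' := fun s => (1 - s - √2 / 8) * -1)
    (fun t => (hasDerivAt_peanoKernel (1 - t)).comp t ((hasDerivAt_id' t).const_sub 1))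
    (φ'' := fun _ => 1)
    (fun t => (((hasDerivAt_id' t).const_sub 1).sub_const (√2 / 8) |>.mul_const (-1)).congr_deriv
      (by norm_num))
    continuous_const
  have hsplit := intervalIntegral.integral_add_adjacent_intervals
    (h₁.mono left_mem_uIcc hm).intervalIntegrable (h₁.mono hm right_mem_uIcc).intervalIntegrable
  rw [← hsplit, hL, hR]
  have hk₀ : peanoKernel 0 = -((4 - 3 * √2) / 96) := by simp [peanoKernel]
  rw [show (1:ℝ) - 1/2 = 1/2 by norm_num, sub_self, hk₀]
  simp only [one_mul]
  ring

theorem stmt_14 (f f' f'' : ℝ → ℝ) (γ₂ Γ₂ : ℝ)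
    (hf : ∀ t ∈ Icc (0:ℝ) 1, f t = f 0 + ∫ s in (0:ℝ)..t, f' s)
    (hac : ∀ t ∈ Icc (0:ℝ) 1, f' t = f' 0 + ∫ s in (0:ℝ)..t, f'' s)
    (hint : IntervalIntegrable f'' volume 0 1)
    (hbd : ∀ t ∈ Icc (0:ℝ) 1, γ₂ ≤ f'' t ∧ f'' t ≤ Γ₂) :
    |((∫ t in (0:ℝ)..1, f t) - Real.sqrt 2 / 8 * f 0
        - (1 - Real.sqrt 2 / 4) * f (1/2) - Real.sqrt 2 / 8 * f 1)
      - (4 - 3 * Real.sqrt 2) / 96 * (f' 1 - f' 0)|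
      ≤ (Γ₂ - γ₂) / 2 * (5/96 * Real.sqrt 6 - 29/432 * Real.sqrt 3) := by
  have h₂ : IsPrimitiveOn f' f'' 0 1 := ⟨hint, by rwa [uIcc_of_le zero_le_one]⟩
  have h₁ : IsPrimitiveOn f f' 0 1 := ⟨h₂.intervalIntegrable, by rwa [uIcc_of_le zero_le_one]⟩
  have hm : (1/2 : ℝ) ∈ uIcc 0 1 := by rw [uIcc_of_le zero_le_one]; norm_num
  have hk : Continuous peanoKernel := by unfold peanoKernel; fun_prop
  have hreflect : ∀ g : ℝ → ℝ, ∫ s in (1/2:ℝ)..1, g (1 - s) = ∫ s in (0:ℝ)..1/2, g s :=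
    fun g => by rw [intervalIntegral.integral_comp_sub_left]; norm_num
  have hL := abs_integral_mul_le_of_integral_eq_zero (by norm_num) hk integral_peanoKernel
    (h₂.mono left_mem_uIcc hm).1 fun t ht => hbd t ⟨ht.1, ht.2.trans (by norm_num)⟩
  have hR := abs_integral_mul_le_of_integral_eq_zero (K := fun s => peanoKernel (1 - s))
    (by norm_num) (hk.comp (continuous_sub_left 1))
    ((hreflect peanoKernel).trans integral_peanoKernel) (h₂.mono hm right_mem_uIcc).1
    fun t ht => hbd t ⟨(by norm_num : (0:ℝ) ≤ 1/2).trans ht.1, ht.2⟩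
  rw [quadrature_error_eq_integral_peanoKernel h₁ h₂]
  calc _ ≤ _ := abs_add_le _ _
    _ ≤ _ := add_le_add hL hR
    _ = _ := by
      rw [hreflect fun s => |peanoKernel s|, integral_abs_peanoKernel]
      ring
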